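/- arXiv:2207.07395 — 2 statements merged into one kernel-verified Lean document; each statement's English description precedes it below -/
import Mathlib

section
/- If φ: X → X' is a surjective morphism of geometries, then dim X ≥ dim X'. Moreover, if dim X = dim X' < ∞, then φ is an isomorphism of geometries. -/
/-!
The independent sets of a geometry satisfy the axioms of a finitary matroid, so matroid rank
theory applies to `X` and `X'`. Since `φ (cl A) ⊆ cl (φ A)`, a section of `φ` sends independent
sets of `X'` to independent sets of `X`; this embeds every basis of `X'` into every basis of `X`.

For the second part, extending a basis `J` of `A ⊆ X` to a basis `B` of `X` shows that
`φ (A ∪ (B \ J))` spans `X'`, whence `r X' + r A ≤ r (φ A) + r X`. When `r X = r X'` is finite,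
`φ` therefore does not lower the rank of any set. A pair `{x, y}` of rank 2 then cannot collapse
to a point, and for a subspace `S` and `w ∉ S` the set `S ∪ {w}` has rank `r S + 1`, so
`φ w ∉ cl (φ S)`: the image of a subspace is closed.
-/

/-- A *geometry*: a closure space presented by its family of subspaces, satisfying
axioms G1 (∅, univ, singletons are subspaces), G2 (intersections of subspaces are
subspaces), G3 (MacLane–Steinitz exchange: no subspace strictly between `S` and `S ∨ x`)
and G4 (finitary). -/
structure GeometryOn (X : Type*) where
  IsSubspace : Set X → Prop
  empty_isSubspace : IsSubspace ∅
  univ_isSubspace : IsSubspace Set.univ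
  singleton_isSubspace : ∀ x : X, IsSubspace {x}
  sInter_isSubspace : ∀ 𝒮 : Set (Set X), (∀ S ∈ 𝒮, IsSubspace S) → IsSubspace (⋂₀ 𝒮)
  exchange : ∀ (S : Set X) (x : X), IsSubspace S → x ∉ S →
    ¬ ∃ S' : Set X, IsSubspace S' ∧ S ⊂ S' ∧ S' ⊂ ⋂₀ {T | IsSubspace T ∧ S ∪ {x} ⊆ T}
  finitary : ∀ (A : Set X) (x : X), x ∈ ⋂₀ {T | IsSubspace T ∧ A ⊆ T} →
    ∃ F : Finset X, ↑F ⊆ A ∧ x ∈ ⋂₀ {T | IsSubspace T ∧ ↑F ⊆ T}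

namespace GeometryOn

variable {X X' : Type*}

/-- The closure of `A`: the least subspace containing `A`. -/
def cl (G : GeometryOn X) (A : Set X) : Set X := ⋂₀ {T | G.IsSubspace T ∧ A ⊆ T}

/-- `A` is independent: no point of `A` lies in the closure of the remaining ones. -/
def Independent (G : GeometryOn X) (A : Set X) : Prop := ∀ a ∈ A, a ∉ G.cl (A \ {a})

/-- `B` is a basis of the subspace `S`: independent and generating `S`. -/
def IsBasisOf (G : GeometryOn X) (B S : Set X) : Prop :=
  B ⊆ S ∧ G.Independent B ∧ G.cl B = S

/-- `S` has (finite) dimension `d ∈ ℤ`: it has a basis with `d + 1` elements. -/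
def HasDimZ (G : GeometryOn X) (S : Set X) (d : ℤ) : Prop :=
  ∃ B : Finset X, G.IsBasisOf ↑B S ∧ (B.card : ℤ) = d + 1

/-- A morphism of geometries: preimages of subspaces are subspaces. -/
def IsMorphism (G : GeometryOn X) (G' : GeometryOn X') (φ : X → X') : Prop :=
  ∀ S' : Set X', G'.IsSubspace S' → G.IsSubspace (φ ⁻¹' S')

end GeometryOn

namespace GeometryOn

open Set Function

variable {X X' : Type*} {G : GeometryOn X} {A I J S : Set X} {x y : X}

theorem subset_cl (A : Set X) : A ⊆ G.cl A := fun _ hx _ hT => hT.2 hx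

theorem cl_isSubspace (A : Set X) : G.IsSubspace (G.cl A) :=
  G.sInter_isSubspace _ fun _ hT => hT.1

theorem cl_minimal (hS : G.IsSubspace S) (h : A ⊆ S) : G.cl A ⊆ S :=
  fun _ hx => hx S ⟨hS, h⟩

theorem cl_subset_cl_of_subset_cl (h : A ⊆ G.cl J) : G.cl A ⊆ G.cl J :=
  cl_minimal (cl_isSubspace J) h

theorem cl_mono (h : A ⊆ J) : G.cl A ⊆ G.cl J :=
  cl_subset_cl_of_subset_cl (h.trans (subset_cl J))

theorem IsSubspace.cl_eq (hS : G.IsSubspace S) : G.cl S = S :=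
  (cl_minimal hS subset_rfl).antisymm (subset_cl S)

theorem cl_exchange (hy : y ∈ G.cl (insert x A)) (hyA : y ∉ G.cl A) :
    x ∈ G.cl (insert y A) := by
  have hxA : x ∉ G.cl A := fun hx =>
    hyA (cl_subset_cl_of_subset_cl (insert_subset hx (subset_cl A)) hy)
  have hspan : G.cl (G.cl A ∪ {x}) = G.cl (insert x A) := by
    refine (cl_subset_cl_of_subset_cl (union_subset (cl_mono (subset_insert x A)) ?_)).antisymm
      (cl_subset_cl_of_subset_cl (insert_subset ?_ ((subset_cl (G := G) A).trans ?_)))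
    · exact singleton_subset_iff.2 (subset_cl _ (mem_insert x A))
    · exact subset_cl _ (mem_union_right _ rfl)
    · exact subset_union_left.trans (subset_cl (G := G) _)
  by_contra hx
  refine G.exchange (G.cl A) x (cl_isSubspace A) hxA
    ⟨G.cl (insert y A), cl_isSubspace _, ?_, ?_⟩
  · exact ssubset_of_subset_not_subset (cl_mono (subset_insert y A))
      fun h => hyA (h (subset_cl _ (mem_insert y A)))
  · change _ ⊂ G.cl (G.cl A ∪ {x})
    rw [hspan]
    exact ssubset_of_subset_not_subset (cl_subset_cl_of_subset_cl
      (insert_subset hy ((subset_cl A).trans (cl_mono (subset_insert x A)))))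
      fun h => hx (h (subset_cl _ (mem_insert x A)))

theorem Independent.mono (hJ : G.Independent J) (h : I ⊆ J) : G.Independent I :=
  fun a ha hcl => hJ a (h ha) (cl_mono (sdiff_subset_sdiff_left h) hcl)

theorem Independent.insert_of_notMem_cl (hI : G.Independent I) (hx : x ∉ G.cl I) :
    G.Independent (insert x I) := by
  have hxI : x ∉ I := fun h => hx (subset_cl I h)
  rintro a (rfl | haI) hcl
  · rw [insert_sdiff_self_of_notMem hxI] at hcl
    exact hx hcl
  · have hxa : x ∉ ({a} : Set X) := fun h => hxI (h ▸ haI)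
    rw [insert_sdiff_of_notMem _ hxa] at hcl
    have := cl_exchange hcl (hI a haI)
    rw [insert_sdiff_self_of_mem haI] at this
    exact hx this

theorem Independent.mem_cl_iff (hI : G.Independent I) :
    x ∈ G.cl I ↔ (G.Independent (insert x I) → x ∈ I) := by
  refine ⟨fun hx hxI => ?_, fun h => ?_⟩
  · by_contra hxI'
    exact hxI x (mem_insert x I) (by rwa [insert_sdiff_self_of_notMem hxI'])
  · by_contra hx
    exact hx (subset_cl I (h (hI.insert_of_notMem_cl hx)))

theorem independent_of_forall_finite (h : ∀ J ⊆ I, J.Finite → G.Independent J) :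
    G.Independent I := by
  intro a ha hcl
  obtain ⟨F, hFI, haF⟩ := G.finitary _ a hcl
  have haF' : a ∉ (F : Set X) := fun h => (hFI h).2 rfl
  refine h (insert a F) (insert_subset ha (hFI.trans sdiff_subset)) (F.finite_toSet.insert a)
    a (mem_insert a _) ?_
  rwa [insert_sdiff_self_of_notMem haF']

theorem independent_pair (hxy : x ≠ y) : G.Independent {x, y} := by
  have hsingle : ∀ z : X, G.cl {z} = {z} := fun z => (G.singleton_isSubspace z).cl_eq
  rintro a (rfl | rfl) hcl
  · rw [pair_sdiff_left hxy, hsingle] at hcl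
    exact hxy hcl
  · rw [pair_sdiff_right hxy, hsingle] at hcl
    exact hxy hcl.symm

theorem Independent.exists_insert_of_not_maximal {B : Set X} (hI : G.Independent I)
    (hI_max : ¬ Maximal G.Independent I) (hB_max : Maximal G.Independent B) :
    ∃ x ∈ B \ I, G.Independent (insert x I) := by
  obtain ⟨y, hyI, hy⟩ :=
    Set.exists_insert_of_not_maximal (fun _ _ hJ hIJ => hJ.mono hIJ) hI hI_max
  have hy_cl : y ∉ G.cl I := fun h => hyI (hI.mem_cl_iff.1 h hy)
  -- `B` spans `X` while `I` does not, so some point of `B` lies outside `cl I`.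
  have hB_span : ∀ z, z ∈ G.cl B := fun z => hB_max.1.mem_cl_iff.2 hB_max.mem_of_prop_insert
  obtain ⟨z, hzB, hz_cl⟩ :=
    not_subset.1 fun hBI => hy_cl (cl_subset_cl_of_subset_cl hBI (hB_span y))
  exact ⟨z, ⟨hzB, fun h => hz_cl (subset_cl I h)⟩, hI.insert_of_notMem_cl hz_cl⟩

variable (G) in
noncomputable def toMatroid : Matroid X :=
  (IndepMatroid.ofFinitary univ G.Independent (fun _ ha => ha.elim) (fun _ _ hJ hIJ => hJ.mono hIJ)
    (fun _ _ hI hI_max hB_max => hI.exists_insert_of_not_maximal hI_max hB_max)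
    (fun _ h => independent_of_forall_finite h) (fun _ _ => subset_univ _)).matroid

@[simp] theorem toMatroid_indep : G.toMatroid.Indep I ↔ G.Independent I := Iff.rfl

@[simp] theorem toMatroid_E : G.toMatroid.E = univ := rfl

instance : G.toMatroid.Finitary := IndepMatroid.ofFinitary_finitary ..

theorem toMatroid_closure (A : Set X) : G.toMatroid.closure A = G.cl A := by
  obtain ⟨I, hIA⟩ := G.toMatroid.exists_isBasis A
  have hI : G.Independent I := hIA.indep
  have hclI : G.toMatroid.closure I = G.cl I := by
    ext x
    rw [hIA.indep.mem_closure_iff', hI.mem_cl_iff]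
    simp
  rw [← hIA.closure_eq_closure, hclI]
  exact (cl_mono hIA.subset).antisymm (cl_subset_cl_of_subset_cl (hclI ▸ hIA.subset_closure))

theorem toMatroid_isBase_iff {B : Set X} : G.toMatroid.IsBase B ↔ G.IsBasisOf B univ := by
  rw [Matroid.isBase_iff_indep_closure_eq, toMatroid_closure, IsBasisOf]
  simp

namespace IsMorphism

variable {G' : GeometryOn X'} {φ : X → X'}

theorem image_cl_subset (hφ : G.IsMorphism G' φ) (A : Set X) :
    φ '' G.cl A ⊆ G'.cl (φ '' A) :=
  image_subset_iff.2 (cl_minimal (hφ _ (cl_isSubspace _)) (image_subset_iff.1 (subset_cl _)))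

theorem independent_image_of_leftInverse (hφ : G.IsMorphism G' φ) {s : X' → X}
    (hs : LeftInverse φ s) {I' : Set X'} (hI' : G'.Independent I') :
    G.Independent (s '' I') := by
  rintro _ ⟨b, hb, rfl⟩ hcl
  refine hI' b hb (cl_mono ?_ (hs b ▸ hφ.image_cl_subset _ (mem_image_of_mem φ hcl)))
  rintro _ ⟨_, ⟨⟨c, hc, rfl⟩, hcb⟩, rfl⟩
  exact ⟨by rwa [hs c], fun h => hcb (congrArg s (by rwa [hs c] at h))⟩

theorem eRk_image_le (hφ : G.IsMorphism G' φ) (A : Set X) :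
    G'.toMatroid.eRk (φ '' A) ≤ G.toMatroid.eRk A := by
  obtain ⟨J, hJ⟩ := G.toMatroid.exists_isBasis A
  have hAJ : φ '' A ⊆ G'.toMatroid.closure (φ '' J) := by
    rw [toMatroid_closure]
    exact (image_mono (toMatroid_closure (G := G) J ▸ hJ.subset_closure)).trans
      (hφ.image_cl_subset J)
  calc G'.toMatroid.eRk (φ '' A) ≤ G'.toMatroid.eRk (φ '' J) := by
        simpa only [Matroid.eRk_closure_eq] using G'.toMatroid.eRk_mono hAJ
    _ ≤ J.encard := (G'.toMatroid.eRk_le_encard _).trans (encard_image_le φ J)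
    _ = G.toMatroid.eRk A := hJ.encard_eq_eRk

theorem eRank_add_eRk_le (hφ : G.IsMorphism G' φ) (hsurj : Surjective φ) (A : Set X) :
    G'.toMatroid.eRank + G.toMatroid.eRk A ≤ G'.toMatroid.eRk (φ '' A) + G.toMatroid.eRank := by
  -- Extend a basis `J` of `A` to a base `B` of `X`: the image of `A ∪ (B \ J)` spans `X'`.
  obtain ⟨J, hJ⟩ := G.toMatroid.exists_isBasis A
  obtain ⟨B, hB, hJB⟩ := hJ.indep.exists_isBase_superset
  have hBA : B ⊆ A ∪ B \ J := fun b hb => (em (b ∈ J)).imp (fun h => hJ.subset h) (⟨hb, ·⟩)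
  have hspan : G'.toMatroid.E ⊆ G'.toMatroid.closure (φ '' (A ∪ B \ J)) := by
    rw [toMatroid_closure, toMatroid_E, ← image_univ_of_surjective hsurj,
      ← (toMatroid_isBase_iff.1 hB).2.2]
    exact (image_mono (cl_mono hBA)).trans (hφ.image_cl_subset _)
  calc G'.toMatroid.eRank + G.toMatroid.eRk A
      = G'.toMatroid.eRk (φ '' A ∪ φ '' (B \ J)) + G.toMatroid.eRk A := by
        rw [← image_union, ← Matroid.eRk_closure_eq G'.toMatroid, Matroid.eRk_eq_eRank hspan]
    _ ≤ G'.toMatroid.eRk (φ '' A) + G'.toMatroid.eRk (φ '' (B \ J)) + G.toMatroid.eRk A := by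
        gcongr
        exact G'.toMatroid.eRk_union_le_eRk_add_eRk _ _
    _ ≤ G'.toMatroid.eRk (φ '' A) + (B \ J).encard + J.encard := by
        rw [hJ.encard_eq_eRk]
        gcongr
        exact (G'.toMatroid.eRk_le_encard _).trans (encard_image_le _ _)
    _ = G'.toMatroid.eRk (φ '' A) + G.toMatroid.eRank := by
        rw [add_assoc, encard_sdiff_add_encard_of_subset hJB, hB.encard_eq_eRank]

theorem nonempty_embedding_of_isBasisOf (hφ : G.IsMorphism G' φ) (hsurj : Surjective φ)
    {B : Set X} {B' : Set X'} (hB : G.IsBasisOf B univ) (hB' : G'.IsBasisOf B' univ) :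
    Nonempty (B' ↪ B) := by
  have hs : LeftInverse φ (surjInv hsurj) := rightInverse_surjInv hsurj
  have hsB' : G.toMatroid.Indep (surjInv hsurj '' B') :=
    hφ.independent_image_of_leftInverse hs hB'.2.1
  obtain ⟨e⟩ := (Cardinal.le_def _ _).1 (hsB'.cardinalMk_le_cRank.trans_eq
    (toMatroid_isBase_iff.2 hB).cardinalMk_eq_cRank.symm)
  exact ⟨(Equiv.Set.image _ B' hs.injective).toEmbedding.trans e⟩

section EqualFiniteRank

variable (hφ : G.IsMorphism G' φ) (hsurj : Surjective φ)
  (hrank : G'.toMatroid.eRank = G.toMatroid.eRank) (hfin : G.toMatroid.eRank ≠ ⊤)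
include hφ hsurj hrank hfin

theorem eRk_le_eRk_image (A : Set X) : G.toMatroid.eRk A ≤ G'.toMatroid.eRk (φ '' A) := by
  have := hφ.eRank_add_eRk_le hsurj A
  rwa [hrank, add_comm, ENat.add_le_add_iff_right hfin] at this

theorem injective : Injective φ := by
  intro x y hxy
  by_contra hne
  have h := hφ.eRk_le_eRk_image hsurj hrank hfin {x, y}
  rw [(toMatroid_indep.2 (independent_pair hne)).eRk_eq_encard,
    encard_pair hne, image_pair, hxy, pair_eq_singleton] at h
  exact absurd (h.trans (G'.toMatroid.eRk_singleton_le _)) (by decide)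

theorem isSubspace_image (hS : G.IsSubspace S) : G'.IsSubspace (φ '' S) := by
  suffices h : G'.cl (φ '' S) ⊆ φ '' S from
    (subset_cl _).antisymm h ▸ cl_isSubspace _
  intro z hz
  obtain ⟨w, rfl⟩ := hsurj z
  refine ⟨w, by_contra fun hw => ?_, rfl⟩
  have hSfin : G.toMatroid.eRk S ≠ ⊤ := ((G.toMatroid.eRk_le_eRank S).trans_lt hfin.lt_top).ne
  have hinsert : G.toMatroid.eRk (insert w S) = G.toMatroid.eRk S + 1 :=
    Matroid.eRk_insert_eq_add_one ⟨trivial, by rwa [toMatroid_closure, hS.cl_eq]⟩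
  have himage : G'.toMatroid.eRk (φ '' insert w S) = G'.toMatroid.eRk (φ '' S) := by
    rw [image_insert_eq, ← Matroid.eRk_insert_closure_eq, toMatroid_closure,
      insert_eq_of_mem hz, ← toMatroid_closure, Matroid.eRk_closure_eq]
  have h := (hφ.eRk_le_eRk_image hsurj hrank hfin (insert w S)).trans
    (himage.trans_le (hφ.eRk_image_le S))
  rw [hinsert, ENat.add_one_le_iff hSfin] at h
  exact lt_irrefl _ h

end EqualFiniteRank

end IsMorphism

end GeometryOn

open GeometryOn in
/-- a surjective morphism of geometries satisfies `dim X ≥ dim X'`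
(any basis of `X'` embeds into any basis of `X`, i.e. has cardinality at most that of
a basis of `X`); and if `dim X = dim X' < ∞` then `φ` is an isomorphism. -/
theorem surjective_morphism_dim {X X' : Type*} (G : GeometryOn X) (G' : GeometryOn X')
    (φ : X → X') (hφ : G.IsMorphism G' φ) (hsurj : Function.Surjective φ) :
    (∀ B : Set X, ∀ B' : Set X', G.IsBasisOf B Set.univ → G'.IsBasisOf B' Set.univ →
      Nonempty (B' ↪ B)) ∧
    (∀ (B : Finset X) (B' : Finset X'),
      G.IsBasisOf ↑B Set.univ → G'.IsBasisOf ↑B' Set.univ → B.card = B'.card →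
      Function.Bijective φ ∧ ∀ S : Set X, G.IsSubspace S → G'.IsSubspace (φ '' S)) := by
  refine ⟨fun B B' hB hB' => hφ.nonempty_embedding_of_isBasisOf hsurj hB hB',
    fun B B' hB hB' hcard => ?_⟩
  have hrankB := (toMatroid_isBase_iff.2 hB).encard_eq_eRank
  have hrankB' := (toMatroid_isBase_iff.2 hB').encard_eq_eRank
  rw [Set.encard_coe_eq_coe_finsetCard] at hrankB hrankB'
  have hrank : G'.toMatroid.eRank = G.toMatroid.eRank := by rw [← hrankB, ← hrankB', hcard]
  have hfin : G.toMatroid.eRank ≠ ⊤ := hrankB ▸ ENat.natCast_ne_top _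
  exact ⟨⟨hφ.injective hsurj hrank hfin, hsurj⟩,
    fun S hS => hφ.isSubspace_image hsurj hrank hfin hS⟩
end

section
/- If two semilinear maps Φ, Φ': V → V' between vector spaces over division rings induce the same partial projective morphism φ: ℙ(V) ⇢ ℙ(V') and this morphism is not constant, then Φ' = λΦ for some nonzero scalar λ ∈ K'. -/
/-- if two semilinear maps `Φ, Φ' : V → V'` (additive, with associated
ring morphisms `σ, σ' : K → K'`) induce the same partial projective morphism
`ℙ(V) ⇢ ℙ(V')` (i.e. `⟨Φ' v⟩ = ⟨Φ v⟩` for every `v`, in particular they have the same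
kernel), and this morphism is not constant (two points of the image span distinct
points of `ℙ(V')`), then `Φ' = λ • Φ` for some nonzero scalar `λ ∈ K'`. -/
theorem semilinear_proportional_of_same_projectivization
    {K K' V V' : Type*} [DivisionRing K] [DivisionRing K']
    [AddCommGroup V] [Module K V] [AddCommGroup V'] [Module K' V']
    (Φ Φ' : V → V')
    (haddΦ : ∀ u v : V, Φ (u + v) = Φ u + Φ v)
    (σ : K →+* K') (hσ : ∀ (c : K) (v : V), Φ (c • v) = σ c • Φ v)
    (haddΦ' : ∀ u v : V, Φ' (u + v) = Φ' u + Φ' v)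
    (σ' : K →+* K') (hσ' : ∀ (c : K) (v : V), Φ' (c • v) = σ' c • Φ' v)
    (hsame : ∀ v : V, ∃ μ : K', μ ≠ 0 ∧ Φ' v = μ • Φ v)
    (hnonconst : ∃ v w : V, Φ v ≠ 0 ∧ Φ w ≠ 0 ∧ ∀ c : K', Φ w ≠ c • Φ v) :
    ∃ lam : K', lam ≠ 0 ∧ ∀ v : V, Φ' v = lam • Φ v := by
  obtain ⟨v, w, hv0, hw0, hvw⟩ := hnonconst
  -- key lemma: coefficients agree on "independent" pairs
  have key : ∀ (u z : V) (μu μz : K'), Φ u ≠ 0 → (∀ c : K', Φ z ≠ c • Φ u) →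
      Φ' u = μu • Φ u → Φ' z = μz • Φ z → μu = μz := by
    intro u z μu μz hu0 hindep hμu hμz
    have hz0 : Φ z ≠ 0 := by
      intro h
      exact hindep 0 (by simp [h])
    obtain ⟨μ, hμ0, hμ⟩ := hsame (u + z)
    rw [haddΦ' u z, haddΦ u z, hμu, hμz, smul_add] at hμ
    have heq : (μu - μ) • Φ u = (μ - μz) • Φ z := by
      rw [sub_smul, sub_smul, sub_eq_sub_iff_add_eq_add, hμ]
      exact add_comm _ _
    have hμz' : μ = μz := by
      by_contra h
      have hne : μ - μz ≠ 0 := sub_ne_zero.mpr h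
      have : Φ z = ((μ - μz)⁻¹ * (μu - μ)) • Φ u := by
        rw [mul_smul, heq, smul_smul, inv_mul_cancel₀ hne, one_smul]
      exact hindep _ this
    have : (μu - μ) • Φ u = 0 := by
      rw [heq, hμz', sub_self, zero_smul]
    have := (smul_eq_zero.mp this).resolve_right hu0
    rw [sub_eq_zero.mp this, hμz']
  obtain ⟨μv, hμv0, hμv⟩ := hsame v
  refine ⟨μv, hμv0, fun u => ?_⟩
  obtain ⟨μu, hμu0, hμu⟩ := hsame u
  by_cases hu0 : Φ u = 0
  · rw [hμu, hu0, smul_zero, smul_zero]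
  obtain ⟨μw, hμw0, hμw⟩ := hsame w
  have hvw' : μv = μw := key v w μv μw hv0 hvw hμv hμw
  by_cases hdep : ∃ c : K', Φ u = c • Φ v
  · obtain ⟨c, hc⟩ := hdep
    have hc0 : c ≠ 0 := by
      intro h; exact hu0 (by simp [hc, h])
    have hindep : ∀ d : K', Φ w ≠ d • Φ u := by
      intro d h
      exact hvw (d * c) (by rw [h, hc, smul_smul])
    have : μu = μw := key u w μu μw hu0 hindep hμu hμw
    rw [hμu, this, ← hvw']
  · push_neg at hdep
    have : μv = μu := key v u μv μu hv0 hdep hμv hμu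
    rw [hμu, ← this]
end
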